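/- Let g(x,y) = (y - f(x))² - (y - f_ρ(x))², where f_ρ is the regression function of ρ, |y| ≤ M a.s., ‖f‖_∞ ≤ M, ‖f_ρ‖_∞ ≤ M. Then E[g²] ≤ 16M² E[g]. -/

import Mathlib

/-!
Writing `d = f - f_ρ`, one has `g = d² + 2 d (f_ρ - y)`. Conditionally on `x` the second term has
mean zero, because `f_ρ(x)` is the mean of `ρ(· | x)`; hence `E[g] = E[d²]`. Pointwise,
`g = d (2y - f - f_ρ)` with `|2y - f - f_ρ| ≤ 4M`, so `g² ≤ 16 M² d²`.
-/

open MeasureTheory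

section

variable {X : Type*} [MeasurableSpace X]

theorem sq_sub_sq_sub_sq_le {y a b M : ℝ} (hy : |y| ≤ M) (ha : |a| ≤ M) (hb : |b| ≤ M) :
    ((y - a) ^ 2 - (y - b) ^ 2) ^ 2 ≤ 16 * M ^ 2 * (a - b) ^ 2 := by
  obtain ⟨hy₁, hy₂⟩ := abs_le.1 hy
  obtain ⟨ha₁, ha₂⟩ := abs_le.1 ha
  obtain ⟨hb₁, hb₂⟩ := abs_le.1 hb
  have hbound : (2 * y - a - b) ^ 2 ≤ (4 * M) ^ 2 := sq_le_sq' (by linarith) (by linarith)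
  calc ((y - a) ^ 2 - (y - b) ^ 2) ^ 2 = (a - b) ^ 2 * (2 * y - a - b) ^ 2 := by ring
    _ ≤ (a - b) ^ 2 * (4 * M) ^ 2 := mul_le_mul_of_nonneg_left hbound (sq_nonneg _)
    _ = 16 * M ^ 2 * (a - b) ^ 2 := by ring

theorem integrable_sq_sub_of_abs_le {μ : Measure X} [IsFiniteMeasure μ] {u v : X → ℝ} {M : ℝ}
    (hu : Measurable u) (hv : Measurable v) (huM : ∀ x, |u x| ≤ M) (hvM : ∀ x, |v x| ≤ M) :
    Integrable (fun x => (u x - v x) ^ 2) μ := by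
  refine Integrable.of_bound ((hu.sub hv).pow_const 2).aestronglyMeasurable ((2 * M) ^ 2)
    (ae_of_all _ fun x => ?_)
  have hdiff : |u x - v x| ≤ 2 * M := (abs_sub _ _).trans (by linarith [huM x, hvM x])
  rw [Real.norm_eq_abs, abs_pow]
  exact pow_le_pow_left₀ (abs_nonneg _) hdiff 2

noncomputable def regressionFunction (ρ : Measure (X × ℝ)) [IsFiniteMeasure ρ] (x : X) : ℝ :=
  ∫ y, y ∂ρ.condKernel x

variable (ρ : Measure (X × ℝ)) [IsFiniteMeasure ρ]

theorem measurable_regressionFunction : Measurable (regressionFunction ρ) :=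
  (measurable_snd.stronglyMeasurable.integral_kernel_prod_right' (κ := ρ.condKernel)).measurable

variable {ρ}

theorem integral_mul_regressionFunction_sub_eq_zero (hY : Integrable Prod.snd ρ) {φ : X → ℝ}
    (hφ : Integrable (fun z => φ z.1 * (regressionFunction ρ z.1 - z.2)) ρ) :
    ∫ z, φ z.1 * (regressionFunction ρ z.1 - z.2) ∂ρ = 0 := by
  rw [← ρ.integral_condKernel hφ]
  refine integral_eq_zero_of_ae ?_
  filter_upwards [hY.condKernel_ae] with x hx
  rw [integral_const_mul, integral_sub (integrable_const _) hx, integral_const]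
  simp [regressionFunction]

theorem integral_sq_sub_sub_sq_sub_regressionFunction {M : ℝ} (hY : ∀ᵐ z ∂ρ, |z.2| ≤ M)
    (hρM : ∀ x, |regressionFunction ρ x| ≤ M) {f : X → ℝ} (hf : Measurable f)
    (hfM : ∀ x, |f x| ≤ M) :
    ∫ z, ((z.2 - f z.1) ^ 2 - (z.2 - regressionFunction ρ z.1) ^ 2) ∂ρ
      = ∫ z, (f z.1 - regressionFunction ρ z.1) ^ 2 ∂ρ := by
  set r := regressionFunction ρ
  have hr : Measurable r := measurable_regressionFunction ρ
  have hsq : Integrable (fun z : X × ℝ => (f z.1 - r z.1) ^ 2) ρ :=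
    integrable_sq_sub_of_abs_le (hf.comp measurable_fst) (hr.comp measurable_fst)
      (fun z => hfM z.1) (fun z => hρM z.1)
  have hsnd : Integrable Prod.snd ρ :=
    Integrable.of_bound measurable_snd.aestronglyMeasurable M (by simpa only [Real.norm_eq_abs])
  have hcross : Integrable (fun z : X × ℝ => (f z.1 - r z.1) * (r z.1 - z.2)) ρ := by
    refine Integrable.of_bound (((hf.sub hr).comp measurable_fst).mul
      ((hr.comp measurable_fst).sub measurable_snd)).aestronglyMeasurable ((2 * M) * (2 * M)) ?_
    filter_upwards [hY] with z hz
    have h₁ : |f z.1 - r z.1| ≤ 2 * M := (abs_sub _ _).trans (by linarith [hfM z.1, hρM z.1])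
    have h₂ : |r z.1 - z.2| ≤ 2 * M := (abs_sub _ _).trans (by linarith [hρM z.1])
    rw [Real.norm_eq_abs, abs_mul]
    exact mul_le_mul h₁ h₂ (abs_nonneg _) ((abs_nonneg _).trans h₁)
  calc ∫ z, ((z.2 - f z.1) ^ 2 - (z.2 - r z.1) ^ 2) ∂ρ
      = ∫ z, ((f z.1 - r z.1) ^ 2 + 2 * ((f z.1 - r z.1) * (r z.1 - z.2))) ∂ρ := by
        congr 1; ext z; ring
    _ = ∫ z, (f z.1 - r z.1) ^ 2 ∂ρ := by
        rw [integral_add hsq (hcross.const_mul 2), integral_const_mul,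
          integral_mul_regressionFunction_sub_eq_zero (φ := fun x => f x - r x) hsnd hcross, mul_zero, add_zero]

end

theorem variance_loss_difference_bound_general
    {X : Type*} [MeasurableSpace X]
    (ρ : Measure (X × ℝ)) [IsProbabilityMeasure ρ]
    (M : ℝ)
    (hY : ∀ᵐ z ∂ρ, |z.2| ≤ M)
    (fρ : X → ℝ) (hfρ : ∀ x, fρ x = ∫ y, y ∂(ρ.condKernel x))
    (hfρM : ∀ x, |fρ x| ≤ M)
    (f : X → ℝ) (hf : Measurable f) (hfM : ∀ x, |f x| ≤ M)
    (g : X × ℝ → ℝ)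
    (hg : ∀ z, g z = (z.2 - f z.1) ^ 2 - (z.2 - fρ z.1) ^ 2) :
    ∫ z, (g z) ^ 2 ∂ρ ≤ 16 * M ^ 2 * ∫ z, g z ∂ρ := by
  obtain rfl : fρ = regressionFunction ρ := funext hfρ
  obtain rfl : g = fun z => (z.2 - f z.1) ^ 2 - (z.2 - regressionFunction ρ z.1) ^ 2 := funext hg
  have hsq : Integrable (fun z : X × ℝ => (f z.1 - regressionFunction ρ z.1) ^ 2) ρ :=
    integrable_sq_sub_of_abs_le (hf.comp measurable_fst)
      ((measurable_regressionFunction ρ).comp measurable_fst) (fun z => hfM z.1) (fun z => hfρM z.1)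
  calc ∫ z, ((z.2 - f z.1) ^ 2 - (z.2 - regressionFunction ρ z.1) ^ 2) ^ 2 ∂ρ
      ≤ ∫ z, 16 * M ^ 2 * (f z.1 - regressionFunction ρ z.1) ^ 2 ∂ρ :=
        integral_mono_of_nonneg (ae_of_all _ fun _ => sq_nonneg _) (hsq.const_mul _)
          (hY.mono fun z hz => sq_sub_sq_sub_sq_le hz (hfM z.1) (hfρM z.1))
    _ = 16 * M ^ 2 * ∫ z, (f z.1 - regressionFunction ρ z.1) ^ 2 ∂ρ := integral_const_mul _ _
    _ = _ := by rw [integral_sq_sub_sub_sq_sub_regressionFunction hY hfρM hf hfM]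

/-- For `g(x,y) = (y - f(x))² - (y - f_ρ(x))²` with `f_ρ` the regression
function of `ρ`, `|y| ≤ M` a.s., `‖f‖_∞ ≤ M`, `‖f_ρ‖_∞ ≤ M`, one has
`E[g²] ≤ 16M² E[g]`. -/
theorem variance_loss_difference_bound
    {X : Type*} [MeasurableSpace X]
    (ρ : Measure (X × ℝ)) [IsProbabilityMeasure ρ]
    (M : ℝ) (hM : 0 < M)
    (hY : ∀ᵐ z ∂ρ, |z.2| ≤ M)
    (fρ : X → ℝ) (hfρ : ∀ x, fρ x = ∫ y, y ∂(ρ.condKernel x))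
    (hfρM : ∀ x, |fρ x| ≤ M)
    (f : X → ℝ) (hf : Measurable f) (hfM : ∀ x, |f x| ≤ M)
    (g : X × ℝ → ℝ)
    (hg : ∀ z, g z = (z.2 - f z.1) ^ 2 - (z.2 - fρ z.1) ^ 2) :
    ∫ z, (g z) ^ 2 ∂ρ ≤ 16 * M ^ 2 * ∫ z, g z ∂ρ :=
  variance_loss_difference_bound_general ρ M hY fρ hfρ hfρM f hf hfM g hg
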